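/- arXiv:2508.18044 — 4 statements merged into one kernel-verified Lean document; each statement's English description precedes it below -/
import Mathlib

section
/- For every positive integer n, the number r_2(n) of representations of n as an ordered sum of two squares of integers satisfies r_2(n) = 4 * \sum_{d | n} \chi_4(d), where \chi_4 is the nontrivial Dirichlet character modulo 4. -/
/-!
Writing `(x, y)` as the Gaussian integer `x + yi`, `r₂(n)` counts the elements of `ℤ[i]` of
norm `n`. For `n > 0` they fall into associate classes of four elements (the units are `±1, ±i`),
so `r₂(n) = 4 a(n)` with `a(n)` the number of classes of norm `n`. By unique factorisation, an
element of norm `mn` with `m, n` coprime splits, uniquely up to units, into factors of norms `m`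
and `n`, so `a` is multiplicative, as is `n ↦ ∑_{d ∣ n} χ₄(d)`. On prime powers both agree: the
classes of norm `p^k` are that of `(1 + i)^k` if `p = 2`; those of `π^a π̄^(k-a)`, `0 ≤ a ≤ k`,
if `p = π π̄ ≡ 1 mod 4`; and that of `p^(k/2)` if `p ≡ 3 mod 4` and `k` is even, none if `k` is
odd.
-/

open Zsqrtd Finset

local notation "ℤ[i]" => GaussianInt

lemma Int.pow_right_injective_of_prime {q : ℤ} (hq : Prime q) :
    Function.Injective (q ^ ·) :=
  Int.pow_right_injective (Int.prime_iff_natAbs_prime.1 hq).one_lt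

namespace GaussianInt

lemma norm_eq_re_sq_add_im_sq (z : ℤ[i]) : z.norm = z.re ^ 2 + z.im ^ 2 := by
  rw [Zsqrtd.norm_def]; ring

lemma dvd_norm (z : ℤ[i]) : z ∣ (z.norm : ℤ[i]) := ⟨star z, norm_eq_mul_conj z⟩

lemma finite_setOf_norm_eq (n : ℤ) : {z : ℤ[i] | z.norm = n}.Finite := by
  refine ((Set.finite_Icc (-n) n).prod (Set.finite_Icc (-n) n)).image
    (fun p => (⟨p.1, p.2⟩ : ℤ[i])) |>.subset fun z hz => ⟨(z.re, z.im), ?_, rfl⟩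
  have hz : z.re ^ 2 + z.im ^ 2 = n := (norm_eq_re_sq_add_im_sq z).symm.trans hz
  refine ⟨⟨?_, ?_⟩, ?_, ?_⟩ <;> nlinarith [sq_nonneg (z.re + 1), sq_nonneg (z.re - 1),
    sq_nonneg (z.im + 1), sq_nonneg (z.im - 1)]

noncomputable def normFinset (n : ℕ) : Finset ℤ[i] := (finite_setOf_norm_eq n).toFinset

@[simp]
lemma mem_normFinset {n : ℕ} {z : ℤ[i]} : z ∈ normFinset n ↔ z.norm = n :=
  Set.Finite.mem_toFinset _

lemma ncard_sq_add_sq_eq (n : ℕ) :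
    {p : ℤ × ℤ | p.1 ^ 2 + p.2 ^ 2 = (n : ℤ)}.ncard = (normFinset n).card := by
  have : {p : ℤ × ℤ | p.1 ^ 2 + p.2 ^ 2 = (n : ℤ)} =
      (fun z : ℤ[i] => (z.re, z.im)) '' (normFinset n : Set ℤ[i]) := by
    ext ⟨x, y⟩
    simp only [Set.mem_ofPred_eq, Set.mem_image, mem_coe, mem_normFinset,
      norm_eq_re_sq_add_im_sq, Prod.mk.injEq]
    exact ⟨fun h => ⟨⟨x, y⟩, h, rfl, rfl⟩, by rintro ⟨z, hz, rfl, rfl⟩; exact hz⟩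
  rw [this, Set.ncard_image_of_injective _ fun z w h => Zsqrtd.ext (congrArg Prod.fst h)
    (congrArg Prod.snd h), Set.ncard_coe_finset]

def unitFinset : Finset ℤ[i] := {1, -1, ⟨0, 1⟩, ⟨0, -1⟩}

lemma isUnit_iff_mem_unitFinset {u : ℤ[i]} : IsUnit u ↔ u ∈ unitFinset := by
  rw [← norm_eq_one_iff' (by norm_num), norm_eq_re_sq_add_im_sq]
  constructor
  · intro h
    obtain ⟨x, y⟩ := u
    simp only at h
    have hx : x ^ 2 ≤ 1 ^ 2 := by nlinarith [sq_nonneg y]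
    have hy : y ^ 2 ≤ 1 ^ 2 := by nlinarith [sq_nonneg x]
    obtain ⟨hx₁, hx₂⟩ := abs_le_of_sq_le_sq' hx one_pos.le
    obtain ⟨hy₁, hy₂⟩ := abs_le_of_sq_le_sq' hy one_pos.le
    interval_cases x <;> interval_cases y <;> simp_all <;> decide
  · intro h
    fin_cases h <;> rfl

lemma card_unitFinset : unitFinset.card = 4 := by decide

lemma associated_iff_exists_mem_unitFinset {w z : ℤ[i]} :
    Associated w z ↔ ∃ u ∈ unitFinset, w * u = z := by
  simp_rw [← isUnit_iff_mem_unitFinset]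
  exact ⟨fun ⟨u, h⟩ => ⟨u, u.isUnit, h⟩, fun ⟨u, hu, h⟩ => ⟨hu.unit, h⟩⟩

lemma norm_eq_of_associated {w z : ℤ[i]} (h : Associated w z) : w.norm = z.norm :=
  Zsqrtd.norm_eq_of_associated (by norm_num) h

open scoped Classical in
noncomputable def normClasses (n : ℕ) : Finset (Associates ℤ[i]) :=
  (normFinset n).image Associates.mk

lemma mem_normClasses {n : ℕ} {c : Associates ℤ[i]} :
    c ∈ normClasses n ↔ ∃ z : ℤ[i], z.norm = n ∧ Associates.mk z = c := by
  simp [normClasses]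

lemma card_normFinset {n : ℕ} (hn : n ≠ 0) : (normFinset n).card = 4 * (normClasses n).card := by
  classical
  rw [card_eq_sum_card_fiberwise (f := Associates.mk) (t := normClasses n)
    fun z hz => mem_normClasses.2 ⟨z, mem_normFinset.1 hz, rfl⟩, mul_comm]
  refine sum_const_nat fun c hc => ?_
  obtain ⟨w, hw, rfl⟩ := mem_normClasses.1 hc
  have hw₀ : w ≠ 0 := by rintro rfl; simp at hw; omega
  have hfiber : {z ∈ normFinset n | Associates.mk z = Associates.mk w} =
      unitFinset.image (w * ·) := by
    ext z
    simp only [mem_filter, mem_normFinset, mem_image, Associates.mk_eq_mk_iff_associated,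
      ← associated_iff_exists_mem_unitFinset]
    exact ⟨fun h => h.2.symm, fun h => ⟨(norm_eq_of_associated h).symm.trans hw, h.symm⟩⟩
  rw [hfiber, card_image_of_injective _ (mul_right_injective₀ hw₀), card_unitFinset]

lemma card_normClasses_eq_card {n : ℕ} {ι : Type*} (t : Finset ι) (f : ι → ℤ[i])
    (hf : ∀ z : ℤ[i], z.norm = n ↔ ∃ i ∈ t, Associated (f i) z)
    (hinj : ∀ i ∈ t, ∀ j ∈ t, Associated (f i) (f j) → i = j) :
    (normClasses n).card = t.card := by
  classical
  have : normClasses n = t.image (fun i => Associates.mk (f i)) := by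
    ext c
    simp only [mem_normClasses, mem_image]
    constructor
    · rintro ⟨z, hz, rfl⟩
      obtain ⟨i, hi, h⟩ := (hf z).1 hz
      exact ⟨i, hi, Associates.mk_eq_mk_iff_associated.2 h⟩
    · rintro ⟨i, hi, rfl⟩
      exact ⟨f i, (hf _).2 ⟨i, hi, Associated.refl _⟩, rfl⟩
  rw [this, card_image_of_injOn fun i hi j hj h =>
    hinj i hi j hj (Associates.mk_eq_mk_iff_associated.1 h)]

lemma norm_dvd_norm {x y : ℤ[i]} (h : x ∣ y) : x.norm ∣ y.norm := by
  obtain ⟨c, rfl⟩ := h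
  exact ⟨c.norm, Zsqrtd.norm_mul x c⟩

lemma isCoprime_of_isCoprime_norm {x y : ℤ[i]} (h : IsCoprime x.norm y.norm) : IsCoprime x y := by
  have := h.map (Int.castRingHom ℤ[i])
  rw [eq_intCast, eq_intCast, norm_eq_mul_conj, norm_eq_mul_conj] at this
  exact this.of_mul_left_left.of_mul_right_left

lemma associated_left_of_associated_mul {x₁ x₂ y₁ y₂ : ℤ[i]} (h₁ : x₁.norm = y₁.norm)
    (h₂ : x₂.norm = y₂.norm) (hcop : IsCoprime x₁.norm x₂.norm)
    (h : Associated (x₁ * x₂) (y₁ * y₂)) : Associated x₁ y₁ := by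
  have hx : IsCoprime x₁ y₂ := isCoprime_of_isCoprime_norm (h₂ ▸ hcop)
  have hy : IsCoprime y₁ x₂ := isCoprime_of_isCoprime_norm (h₁ ▸ hcop)
  exact associated_of_dvd_dvd (hx.dvd_of_dvd_mul_right ((dvd_mul_right _ _).trans h.dvd))
    (hy.dvd_of_dvd_mul_right ((dvd_mul_right _ _).trans h.symm.dvd))

lemma exists_mul_eq_of_norm_eq_mul {m n : ℕ} (hm : 0 < m) (hn : 0 < n) (hmn : m.Coprime n)
    {z : ℤ[i]} (hz : z.norm = m * n) : ∃ x y : ℤ[i], x.norm = m ∧ y.norm = n ∧ x * y = z := by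
  have hdvd : z ∣ (m : ℤ[i]) * n := by exact_mod_cast hz ▸ dvd_norm z
  obtain ⟨x, y, hx, hy, rfl⟩ := exists_dvd_and_dvd_of_dvd_mul hdvd
  have hxy : x.norm * y.norm = m * n := by rw [← Zsqrtd.norm_mul, hz]
  -- `N x ∣ m²` is coprime to `n`, so `N x ∣ m`; likewise `N y ∣ n`.
  have hxm : x.norm ∣ m := by
    refine IsCoprime.dvd_of_dvd_mul_right ?_ (Dvd.intro _ hxy)
    refine (Nat.isCoprime_iff_coprime.2 (hmn.pow_left 2)).of_isCoprime_of_dvd_left ?_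
    simpa [sq] using norm_dvd_norm hx
  have hyn : y.norm ∣ n := by
    refine IsCoprime.dvd_of_dvd_mul_left ?_ (Dvd.intro_left _ hxy)
    refine (Nat.isCoprime_iff_coprime.2 (hmn.pow_right 2)).symm.of_isCoprime_of_dvd_left ?_
    simpa [sq] using norm_dvd_norm hy
  have hxm' := Int.le_of_dvd (by positivity) hxm
  have hyn' := Int.le_of_dvd (by positivity) hyn
  refine ⟨x, y, ?_, ?_, rfl⟩ <;>
    nlinarith [GaussianInt.norm_nonneg x, GaussianInt.norm_nonneg y]

lemma card_normClasses_mul {m n : ℕ} (hm : 0 < m) (hn : 0 < n) (hmn : m.Coprime n) :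
    (normClasses (m * n)).card = (normClasses m).card * (normClasses n).card := by
  classical
  have hcop : ∀ x y : ℤ[i], x.norm = m → y.norm = n → IsCoprime x.norm y.norm :=
    fun x y hx hy => hx ▸ hy ▸ Nat.isCoprime_iff_coprime.2 hmn
  have himage : normClasses (m * n) =
      (normClasses m ×ˢ normClasses n).image fun c => c.1 * c.2 := by
    ext c
    simp only [mem_normClasses, mem_image, mem_product, Prod.exists]
    constructor
    · rintro ⟨z, hz, rfl⟩
      obtain ⟨x, y, hx, hy, rfl⟩ := exists_mul_eq_of_norm_eq_mul hm hn hmn (by simpa using hz)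
      exact ⟨_, _, ⟨⟨x, hx, rfl⟩, ⟨y, hy, rfl⟩⟩, Associates.mk_mul_mk⟩
    · rintro ⟨_, _, ⟨⟨x, hx, rfl⟩, ⟨y, hy, rfl⟩⟩, rfl⟩
      exact ⟨x * y, by rw [Zsqrtd.norm_mul, hx, hy]; push_cast; ring, Associates.mk_mul_mk.symm⟩
  rw [himage, card_image_of_injOn, card_product]
  rintro ⟨c₁, c₂⟩ hc ⟨d₁, d₂⟩ hd h
  simp only [coe_product, Set.mem_prod, mem_coe, mem_normClasses] at hc hd
  obtain ⟨⟨x₁, hx₁, rfl⟩, ⟨x₂, hx₂, rfl⟩⟩ := hc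
  obtain ⟨⟨y₁, hy₁, rfl⟩, ⟨y₂, hy₂, rfl⟩⟩ := hd
  have h : Associated (x₁ * x₂) (y₁ * y₂) := by
    simpa only [Associates.mk_mul_mk, Associates.mk_eq_mk_iff_associated] using h
  rw [Prod.mk.injEq, Associates.mk_eq_mk_iff_associated, Associates.mk_eq_mk_iff_associated]
  exact ⟨associated_left_of_associated_mul (hx₁.trans hy₁.symm) (hx₂.trans hy₂.symm)
      (hcop _ _ hx₁ hx₂) h,
    associated_left_of_associated_mul (hx₂.trans hy₂.symm) (hx₁.trans hy₁.symm)
      (hcop _ _ hx₁ hx₂).symm (by simpa only [mul_comm] using h)⟩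

lemma norm_pow (z : ℤ[i]) (k : ℕ) : (z ^ k).norm = z.norm ^ k :=
  map_pow (normMonoidHom (d := -1)) z k

instance isLocalHom_normMonoidHom : IsLocalHom (normMonoidHom : ℤ[i] →* ℤ) where
  map_nonunit z hz := (norm_eq_one_iff' (by norm_num) z).1 <|
    (Int.isUnit_iff.1 hz).resolve_right fun h => by
      have := GaussianInt.norm_nonneg z
      simp_all [normMonoidHom]

lemma prime_of_prime_norm {π : ℤ[i]} (h : Prime π.norm) : Prime π :=
  (Irreducible.of_map (f := (normMonoidHom : ℤ[i] →* ℤ)) h.irreducible).prime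

lemma norm_eq_pow_iff_of_mod_four_eq_three {p : ℕ} (hp : p.Prime) (hp3 : p % 4 = 3) {k : ℕ}
    {z : ℤ[i]} : z.norm = (p : ℤ) ^ k ↔ ∃ j, 2 * j = k ∧ Associated ((p : ℤ[i]) ^ j) z := by
  have : Fact p.Prime := ⟨hp⟩
  have hnorm (j : ℕ) : ((p : ℤ[i]) ^ j).norm = (p : ℤ) ^ (2 * j) := by
    rw [norm_pow, norm_natCast, pow_mul, sq]
  constructor
  · intro hz
    have hdvd : z ∣ (p : ℤ[i]) ^ k := by exact_mod_cast hz ▸ dvd_norm z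
    obtain ⟨j, -, hj⟩ := (dvd_prime_pow (prime_of_nat_prime_of_mod_four_eq_three p hp3) k).1 hdvd
    refine ⟨j, Int.pow_right_injective_of_prime (Nat.prime_iff_prime_int.1 hp) ?_, hj.symm⟩
    change (p : ℤ) ^ (2 * j) = p ^ k
    rw [← hnorm, ← norm_eq_of_associated hj, hz]
  · rintro ⟨j, rfl, hj⟩
    rw [← norm_eq_of_associated hj, hnorm]

lemma norm_eq_two_pow_iff {k : ℕ} {z : ℤ[i]} :
    z.norm = 2 ^ k ↔ Associated ((⟨1, 1⟩ : ℤ[i]) ^ k) z := by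
  have hnorm (j : ℕ) : ((⟨1, 1⟩ : ℤ[i]) ^ j).norm = 2 ^ j := by
    rw [norm_pow]; rfl
  have hprime : Prime (⟨1, 1⟩ : ℤ[i]) := prime_of_prime_norm Int.prime_two
  -- `2 = -i (1 + i)²`
  have htwo : Associated ((⟨1, 1⟩ : ℤ[i]) ^ 2) 2 :=
    ⟨⟨⟨0, -1⟩, ⟨0, 1⟩, by decide, by decide⟩, by decide⟩
  constructor
  · intro hz
    have hdvd : z ∣ (⟨1, 1⟩ : ℤ[i]) ^ (2 * k) := by
      rw [pow_mul]
      exact dvd_trans (by exact_mod_cast hz ▸ dvd_norm z) (Associated.pow_pow htwo).symm.dvd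
    obtain ⟨j, -, hj⟩ := (dvd_prime_pow hprime _).1 hdvd
    rw [Int.pow_right_injective_of_prime Int.prime_two
      (by rw [← hnorm, ← norm_eq_of_associated hj, hz] : (2 : ℤ) ^ j = 2 ^ k)] at hj
    exact hj.symm
  · intro h
    rw [← norm_eq_of_associated h, hnorm]

lemma norm_eq_pow_iff_of_prime_norm {π : ℤ[i]} (hπ : Prime π.norm) {k : ℕ} {z : ℤ[i]} :
    z.norm = π.norm ^ k ↔ ∃ a ∈ range (k + 1), Associated (π ^ a * star π ^ (k - a)) z := by
  have hnorm (a b : ℕ) : (π ^ a * star π ^ b).norm = π.norm ^ (a + b) := by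
    rw [Zsqrtd.norm_mul, norm_pow, norm_pow, norm_conj, pow_add]
  constructor
  · intro hz
    have hdvd : z ∣ π ^ k * star π ^ k := by
      rw [← mul_pow, ← norm_eq_mul_conj]; exact_mod_cast hz ▸ dvd_norm z
    obtain ⟨x, y, hx, hy, rfl⟩ := exists_dvd_and_dvd_of_dvd_mul hdvd
    obtain ⟨a, -, ha⟩ := (dvd_prime_pow (prime_of_prime_norm hπ) k).1 hx
    have hπ' : Prime (star π) := prime_of_prime_norm (by rwa [norm_conj])
    obtain ⟨b, -, hb⟩ := (dvd_prime_pow hπ' k).1 hy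
    have hab : a + b = k := Int.pow_right_injective_of_prime hπ <| by
      change π.norm ^ (a + b) = π.norm ^ k
      rw [← hnorm, ← norm_eq_of_associated (ha.mul_mul hb), hz]
    refine ⟨a, mem_range.2 (by omega), ?_⟩
    rw [← hab, add_tsub_cancel_left]
    exact (ha.mul_mul hb).symm
  · rintro ⟨a, ha, h⟩
    rw [← norm_eq_of_associated h, hnorm, Nat.add_sub_cancel' (by simp at ha; omega)]

-- A unit `u` with `π * u = π̄` forces `π` to be `x`, `yi` or `x (1 ± i)`,
-- of norm `x²`, `y²` or `2x²`.
lemma not_dvd_star_of_prime_norm {π : ℤ[i]} (hπ : Prime π.norm) (hodd : π.norm % 2 = 1) :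
    ¬π ∣ star π := by
  intro h
  obtain ⟨u, hu, hu'⟩ := associated_iff_exists_mem_unitFinset.1 <|
    (prime_of_prime_norm hπ).irreducible.associated_of_dvd
      (prime_of_prime_norm (π := star π) (by rwa [norm_conj])).irreducible h
  rw [norm_eq_re_sq_add_im_sq] at hπ hodd
  obtain ⟨x, y⟩ := π
  fin_cases hu <;> simp [Zsqrtd.ext_iff] at hu' hπ hodd
  · obtain rfl : y = 0 := by omega
    simp at hπ
  · obtain rfl : x = 0 := by omega
    simp at hπ
  all_goals rw [hu'.2] at hodd; ring_nf at hodd; omega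

lemma emultiplicity_pow_mul_star_pow {π : ℤ[i]} (hπ : Prime π) (h : ¬π ∣ star π) (a b : ℕ) :
    emultiplicity π (π ^ a * star π ^ b) = a := by
  rw [emultiplicity_mul hπ, emultiplicity_pow_self_of_prime hπ,
    emultiplicity_eq_zero.2 fun h' => h (hπ.dvd_of_dvd_pow h'), add_zero]

lemma card_normClasses_two_pow (k : ℕ) : (normClasses (2 ^ k)).card = 1 :=
  card_normClasses_eq_card {k} (fun j => (⟨1, 1⟩ : ℤ[i]) ^ j) (by simp [norm_eq_two_pow_iff])
    (by simp)

lemma card_normClasses_pow_of_mod_four_eq_three {p : ℕ} (hp : p.Prime) (hp3 : p % 4 = 3)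
    (k : ℕ) : (normClasses (p ^ k)).card = if Even k then 1 else 0 := by
  obtain ⟨j, rfl | rfl⟩ := Nat.even_or_odd' k
  · rw [if_pos (even_two_mul j)]
    exact card_normClasses_eq_card {j} ((p : ℤ[i]) ^ ·)
      (by simp [norm_eq_pow_iff_of_mod_four_eq_three hp hp3]) (by simp)
  · rw [if_neg (Nat.not_even_two_mul_add_one j)]
    exact card_normClasses_eq_card (∅ : Finset ℕ) ((p : ℤ[i]) ^ ·)
      (by simp [norm_eq_pow_iff_of_mod_four_eq_three hp hp3]; omega) (by simp)

lemma card_normClasses_pow_of_mod_four_eq_one {p : ℕ} (hp : p.Prime) (hp1 : p % 4 = 1)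
    (k : ℕ) : (normClasses (p ^ k)).card = k + 1 := by
  have : Fact p.Prime := ⟨hp⟩
  obtain ⟨x, y, hxy⟩ := Nat.Prime.sq_add_sq (p := p) (by omega)
  let π : ℤ[i] := ⟨x, y⟩
  have hπ : π.norm = p := by rw [norm_eq_re_sq_add_im_sq, ← hxy]; push_cast; rfl
  have hN : Prime π.norm := hπ ▸ Nat.prime_iff_prime_int.1 hp
  have hπ' : ¬π ∣ star π := not_dvd_star_of_prime_norm hN (by omega)
  rw [← card_range (k + 1)]
  refine card_normClasses_eq_card _ (fun a => π ^ a * star π ^ (k - a)) (fun z => ?_)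
    fun a _ c _ h => ?_
  · rw [← norm_eq_pow_iff_of_prime_norm hN, hπ, Nat.cast_pow]
  · have := emultiplicity_eq_of_associated_right (a := π) h
    rwa [emultiplicity_pow_mul_star_pow (prime_of_prime_norm hN) hπ',
      emultiplicity_pow_mul_star_pow (prime_of_prime_norm hN) hπ', Nat.cast_inj] at this

lemma card_normClasses_prime_pow {p : ℕ} (hp : p.Prime) (k : ℕ) :
    ((normClasses (p ^ k)).card : ℤ) = ∑ d ∈ (p ^ k).divisors, ZMod.χ₄ (d : ZMod 4) := by
  simp only [Nat.sum_divisors_prime_pow hp, Nat.cast_pow, map_pow]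
  rcases hp.eq_two_or_odd' with rfl | hodd
  · rw [card_normClasses_two_pow, show ZMod.χ₄ ((2 : ℕ) : ZMod 4) = 0 by decide]
    simp [sum_range_succ']
  obtain hp1 | hp3 : p % 4 = 1 ∨ p % 4 = 3 := by have := Nat.odd_iff.1 hodd; omega
  · simp [card_normClasses_pow_of_mod_four_eq_one hp hp1, ZMod.χ₄_nat_one_mod_four hp1]
  · rw [card_normClasses_pow_of_mod_four_eq_three hp hp3, ZMod.χ₄_nat_three_mod_four hp3,
      neg_one_geom_sum]
    by_cases hk : Even k <;> simp [hk, Nat.even_add_one]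

lemma sum_divisors_chi4_mul {m n : ℕ} (hmn : m.Coprime n) :
    ∑ d ∈ (m * n).divisors, ZMod.χ₄ (d : ZMod 4) =
      (∑ d ∈ m.divisors, ZMod.χ₄ (d : ZMod 4)) * ∑ d ∈ n.divisors, ZMod.χ₄ (d : ZMod 4) := by
  have hconv (n : ℕ) : ∑ d ∈ n.divisors, ZMod.χ₄ (d : ZMod 4) =
      ((ArithmeticFunction.zeta : ArithmeticFunction ℤ) * toArithmeticFunction (ZMod.χ₄ ·)) n := by
    rw [ArithmeticFunction.coe_zeta_mul_apply]
    exact sum_congr rfl fun d hd => DirichletCharacter.apply_eq_toArithmeticFunction_apply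
      ZMod.χ₄ (Nat.ne_of_gt (Nat.pos_of_mem_divisors hd))
  simp only [hconv]
  exact (ArithmeticFunction.isMultiplicative_zeta.natCast.mul
    (DirichletCharacter.isMultiplicative_toArithmeticFunction ZMod.χ₄)).map_mul_of_coprime hmn

lemma card_normClasses_eq_sum_chi4 {n : ℕ} (hn : 0 < n) :
    ((normClasses n).card : ℤ) = ∑ d ∈ n.divisors, ZMod.χ₄ (d : ZMod 4) := by
  induction n using Nat.recOnPrimeCoprime with
  | zero => omega
  | prime_pow p k hp => exact card_normClasses_prime_pow hp k
  | coprime a b ha hb hab iha ihb =>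
    rw [card_normClasses_mul (by omega) (by omega) hab, sum_divisors_chi4_mul hab, Nat.cast_mul,
      iha (by omega), ihb (by omega)]

end GaussianInt

theorem r2_eq_four_mul_sum_chi4 (n : ℕ) (hn : 0 < n) :
    (Set.ncard {p : ℤ × ℤ | p.1 ^ 2 + p.2 ^ 2 = (n : ℤ)} : ℤ) =
      4 * ∑ d ∈ n.divisors, ZMod.χ₄ (d : ZMod 4) := by
  rw [GaussianInt.ncard_sq_add_sq_eq, GaussianInt.card_normFinset hn.ne', Nat.cast_mul,
    GaussianInt.card_normClasses_eq_sum_chi4 hn, Nat.cast_ofNat]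
end

section
/- Let d be a positive integer and \alpha an irrational real number. Then there exist infinitely many pairs (b, r) with b an integer and r a positive integer such that gcd(r, b*d) = 1 and |\alpha - b/r| \le 6 d^2 / r^2. -/
/-!
Start from a rational approximation `p / q` of `α` with `|α - p / q| < 1 / q ^ 2` and `q` large.
Any `r` with `p * r ≡ 1 (mod q)` gives `b` with `p * r - q * b = 1`, so `b / r` is in lowest terms
and within `1 / q ^ 2 + 1 / (q * r)` of `α`. Lifting `p⁻¹` from `(ZMod q)ˣ` to `(ZMod (q * d))ˣ`
yields such an `r` coprime to `d` with `q * d ≤ r < 2 * q * d`, and then the error is at most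
`((2 * d) ^ 2 + 2 * d) / r ^ 2 ≤ 6 * d ^ 2 / r ^ 2`.
-/

theorem ZMod.exists_coprime_natCast_eq_unit {n m : ℕ} [NeZero m] (h : n ∣ m) (u : (ZMod n)ˣ) :
    ∃ r : ℕ, r < m ∧ r.Coprime m ∧ (r : ZMod n) = u := by
  obtain ⟨v, rfl⟩ := ZMod.unitsMap_surjective h u
  exact ⟨(v : ZMod m).val, ZMod.val_lt _, ZMod.val_coe_unit_coprime v, ZMod.natCast_val _⟩

theorem exists_mul_sub_mul_eq_one_of_isCoprime {p : ℤ} {q m : ℕ} [NeZero m]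
    (hpq : IsCoprime p q) (hqm : q ∣ m) :
    ∃ r : ℕ, m ≤ r ∧ r < 2 * m ∧ r.Coprime m ∧ ∃ b : ℤ, p * r - q * b = 1 := by
  obtain ⟨r, hrm, hr, hru⟩ :=
    ZMod.exists_coprime_natCast_eq_unit hqm (ZMod.unitOfIsCoprime p hpq)⁻¹
  have hdvd : (q : ℤ) ∣ p * (r + m : ℕ) - 1 := by
    rw [← ZMod.intCast_zmod_eq_zero_iff_dvd]
    push_cast
    rw [(ZMod.natCast_eq_zero_iff m q).2 hqm, add_zero, hru, ← ZMod.coe_unitOfIsCoprime p hpq,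
      Units.mul_inv, sub_self]
  obtain ⟨b, hb⟩ := hdvd
  exact ⟨r + m, by omega, by omega, Nat.coprime_add_self_left.2 hr, b, by linear_combination hb⟩

theorem abs_sub_div_le_of_mul_sub_mul_eq_one {α p q b r c : ℝ} (hq : 0 < q) (hr : 0 < r)
    (hrq : r ≤ c * q) (happrox : |α - p / q| ≤ 1 / q ^ 2) (hdet : p * r - q * b = 1) :
    |α - b / r| ≤ (c ^ 2 + c) / r ^ 2 := by
  have hstep : p / q - b / r = 1 / (q * r) := by
    rw [div_sub_div _ _ hq.ne' hr.ne', hdet]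
  have hfirst : 1 / q ^ 2 ≤ c ^ 2 / r ^ 2 := by
    rw [div_le_div_iff₀ (by positivity) (by positivity)]
    nlinarith
  have hsecond : 1 / (q * r) ≤ c / r ^ 2 := by
    rw [div_le_div_iff₀ (by positivity) (by positivity)]
    nlinarith
  calc |α - b / r| ≤ |α - p / q| + |p / q - b / r| := abs_sub_le _ _ _
    _ = |α - p / q| + 1 / (q * r) := by rw [hstep, abs_of_pos (by positivity : 0 < 1 / (q * r))]
    _ ≤ c ^ 2 / r ^ 2 + c / r ^ 2 := add_le_add (happrox.trans hfirst) hsecond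
    _ = (c ^ 2 + c) / r ^ 2 := by ring

theorem Irrational.exists_rat_lt_den_abs_sub_lt_one_div_den_sq {α : ℝ} (hα : Irrational α)
    (N : ℕ) : ∃ x : ℚ, N < x.den ∧ |α - x| < 1 / (x.den : ℝ) ^ 2 := by
  obtain ⟨ε, hε, hfar⟩ := (hα.eventually_forall_le_dist_cast_rat_of_den_le N).exists_gt
  obtain ⟨n, hn⟩ := exists_nat_one_div_lt hε
  obtain ⟨x, hx, hxn⟩ := Real.exists_rat_abs_sub_le_and_den_le α n.succ_pos
  have hden : (1 : ℝ) ≤ x.den := by exact_mod_cast x.pos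
  have hdenn : (x.den : ℝ) < n + 1 + 1 := by exact_mod_cast Nat.lt_succ_of_le hxn
  refine ⟨x, ?_, ?_⟩
  · by_contra! hxN
    have : |α - x| < ε := by
      refine hx.trans_lt (lt_of_le_of_lt ?_ hn)
      gcongr
      push_cast
      nlinarith
    exact (hfar x hxN).not_gt (by rwa [Real.dist_eq])
  · refine hx.trans_lt ?_
    rw [sq]
    gcongr
    push_cast
    exact hdenn

theorem dirichlet_approx_coprime (d : ℕ) (hd : 0 < d) (α : ℝ) (hα : Irrational α) :
    {p : ℤ × ℕ | 0 < p.2 ∧ Int.gcd (p.2 : ℤ) (p.1 * (d : ℤ)) = 1 ∧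
      |α - (p.1 : ℝ) / (p.2 : ℝ)| ≤ 6 * (d : ℝ) ^ 2 / (p.2 : ℝ) ^ 2}.Infinite := by
  refine Set.Infinite.of_image Prod.snd (Set.infinite_of_forall_exists_gt fun N ↦ ?_)
  obtain ⟨x, hNx, hx⟩ := hα.exists_rat_lt_den_abs_sub_lt_one_div_den_sq N
  have : NeZero (x.den * d) := ⟨by positivity⟩
  obtain ⟨r, hr_ge, hr_lt, hr_cop, b, hdet⟩ := exists_mul_sub_mul_eq_one_of_isCoprime
    (Int.isCoprime_iff_gcd_eq_one.2 x.reduced) (dvd_mul_right x.den d)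
  have hq_le_r : x.den ≤ r := le_mul_of_one_le_right' hd |>.trans hr_ge
  refine ⟨r, ⟨(b, r), ⟨by omega, ?_, ?_⟩, rfl⟩, by omega⟩
  · have hrb : IsCoprime (r : ℤ) b := ⟨x.num, -x.den, by linear_combination hdet⟩
    have hrd : IsCoprime (r : ℤ) d := Nat.isCoprime_iff_coprime.2 hr_cop.coprime_mul_left_right
    exact Int.isCoprime_iff_gcd_eq_one.1 (hrb.mul_right hrd)
  · have hd1 : (1 : ℝ) ≤ d := by exact_mod_cast hd
    have hr : (0 : ℝ) < r := by exact_mod_cast (by omega : 0 < r)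
    have hrq : (r : ℝ) ≤ 2 * d * x.den := by exact_mod_cast (by nlinarith : r ≤ 2 * d * x.den)
    have hdetR : (x.num : ℝ) * r - x.den * b = 1 := by exact_mod_cast hdet
    have hxR : |α - x.num / x.den| ≤ 1 / (x.den : ℝ) ^ 2 := by
      simpa only [Rat.cast_def] using hx.le
    calc |α - b / r| ≤ ((2 * d) ^ 2 + 2 * d) / (r : ℝ) ^ 2 :=
          abs_sub_div_le_of_mul_sub_mul_eq_one (by positivity) hr hrq hxR hdetR
      _ ≤ 6 * d ^ 2 / (r : ℝ) ^ 2 := by gcongr; nlinarith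
end

section
/- Let k be a positive integer and d, r integers. The congruence du \equiv r (mod k) has a solution u with gcd(u,k) = 1 if and only if gcd(d,k) = gcd(r,k); moreover, in that case, the number of such solutions u modulo k is at most gcd(d,k). -/
/-!
Multiplying by a residue coprime to `k` does not change `gcd(·, k)`, which gives one direction.
Conversely, with `g = gcd(d, k)` write `d = g d'`, `r = g r'`, `k = g k'`: then `d'` and `r'` are
units mod `k'`, so `d' u ≡ r' (mod k')` has a solution `u` coprime to `k'`, and it can be chosen
coprime to `k` because `(ℤ/k)ˣ → (ℤ/k')ˣ` is surjective. Any two solutions of `d u ≡ r (mod k)`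
agree modulo `k / g`, so at most `g` of them lie in `[0, k)`.
-/

open Finset

theorem Int.gcd_mul_right_cancel_of_isCoprime (d : ℤ) {u k : ℤ} (hu : IsCoprime u k) :
    Int.gcd (d * u) k = Int.gcd d k := by
  rw [Int.gcd_eq_natAbs, Int.gcd_eq_natAbs, Int.natAbs_mul]
  exact Nat.Coprime.gcd_mul_right_cancel _ (Int.isCoprime_iff_nat_coprime.mp hu)

theorem Int.gcd_eq_of_modEq {k a b : ℤ} (h : a ≡ b [ZMOD k]) : Int.gcd a k = Int.gcd b k := by
  rw [← Int.gcd_emod, h, Int.gcd_emod]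

theorem Int.exists_isCoprime_modEq_of_dvd {m k : ℕ} (hk : k ≠ 0) (hmk : m ∣ k) {u : ℤ}
    (hu : IsCoprime u m) : ∃ v : ℤ, IsCoprime v k ∧ v ≡ u [ZMOD m] := by
  have : NeZero k := ⟨hk⟩
  have hu' : IsUnit (u : ZMod m) := (ZMod.coe_int_isUnit_iff_isCoprime u m).mpr hu.symm
  obtain ⟨w, hw⟩ := ZMod.unitsMap_surjective hmk hu'.unit
  refine ⟨(w : ZMod k).cast, ?_, ?_⟩
  · refine ((ZMod.coe_int_isUnit_iff_isCoprime _ k).mp ?_).symm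
    rw [ZMod.intCast_zmod_cast]
    exact w.isUnit
  · rw [← ZMod.intCast_eq_intCast_iff, ZMod.intCast_cast]
    exact congrArg Units.val hw

theorem Int.exists_isCoprime_mul_modEq_of_isCoprime {m k : ℕ} (hk : k ≠ 0) (hmk : m ∣ k)
    {d r : ℤ} (hd : IsCoprime d m) (hr : IsCoprime r m) :
    ∃ u : ℤ, IsCoprime u k ∧ d * u ≡ r [ZMOD m] := by
  obtain ⟨a, b, hab⟩ := hd
  have ha : IsCoprime a m := ⟨d, b, by linear_combination hab⟩
  obtain ⟨u, hu, hum⟩ := Int.exists_isCoprime_modEq_of_dvd hk hmk (ha.mul_left hr)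
  refine ⟨u, hu, ?_⟩
  calc d * u ≡ d * (a * r) [ZMOD m] := hum.mul_left d
    _ = r - b * m * r := by linear_combination r * hab
    _ ≡ r [ZMOD m] := Int.modEq_iff_dvd.mpr ⟨b * r, by ring⟩

theorem Int.exists_isCoprime_mul_modEq {k : ℕ} (hk : k ≠ 0) {d r : ℤ}
    (h : Int.gcd d k = Int.gcd r k) : ∃ u : ℤ, IsCoprime u k ∧ d * u ≡ r [ZMOD k] := by
  set g := Int.gcd d k
  have hg_pos : 0 < g := Int.gcd_pos_of_ne_zero_right _ (by exact_mod_cast hk)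
  have hgk : g ∣ k := Int.natCast_dvd_natCast.mp (Int.gcd_dvd_right _ _)
  have hgd : (g : ℤ) ∣ d := Int.gcd_dvd_left _ _
  have hgr : (g : ℤ) ∣ r := h ▸ Int.gcd_dvd_left _ _
  have hk₁ : ((k / g : ℕ) : ℤ) = k / g := Int.natCast_div _ _
  have hd : IsCoprime (d / g) (k / g : ℕ) := by
    rw [Int.isCoprime_iff_gcd_eq_one, hk₁]
    exact Int.gcd_div_gcd_div_gcd hg_pos
  have hr : IsCoprime (r / g) (k / g : ℕ) := by
    rw [Int.isCoprime_iff_gcd_eq_one, hk₁, h]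
    exact Int.gcd_div_gcd_div_gcd (h ▸ hg_pos)
  obtain ⟨u, hu, hmod⟩ :=
    Int.exists_isCoprime_mul_modEq_of_isCoprime hk (Nat.div_dvd_of_dvd hgk) hd hr
  refine ⟨u, hu, ?_⟩
  have hmod' := hmod.mul_left' (c := g)
  rwa [← mul_assoc, Int.mul_ediv_cancel' hgd, Int.mul_ediv_cancel' hgr, ← Nat.cast_mul,
    Nat.mul_div_cancel' hgk] at hmod'

theorem Finset.card_le_of_forall_lt_mul_of_modEq {s : Finset ℕ} {m g : ℕ}
    (hs : ∀ x ∈ s, x < m * g) (h : ∀ x ∈ s, ∀ y ∈ s, x ≡ y [MOD m]) : #s ≤ g := by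
  refine (card_le_card_of_injOn (· / m) (t := range g) ?_ ?_).trans (card_range g).le
  · intro x hx
    exact mem_range.mpr (Nat.div_lt_of_lt_mul (hs x hx))
  · intro x hx y hy hxy
    rw [← Nat.div_add_mod x m, ← Nat.div_add_mod y m]
    simp only at hxy
    rw [hxy, h x hx y hy]

theorem Int.card_filter_mul_modEq_le (k : ℕ) (d r : ℤ) :
    #((Finset.range k).filter (fun u : ℕ => d * u ≡ r [ZMOD k])) ≤ Int.gcd d k := by
  rcases Nat.eq_zero_or_pos k with rfl | hk
  · simp
  have hgk : Int.gcd d k ∣ k := Int.natCast_dvd_natCast.mp (Int.gcd_dvd_right _ _)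
  refine card_le_of_forall_lt_mul_of_modEq (m := k / Int.gcd d k) ?_ ?_
  · intro u hu
    rw [Nat.div_mul_cancel hgk]
    exact mem_range.mp (mem_filter.mp hu).1
  · intro u hu v hv
    have huv := ((mem_filter.mp hu).2.trans (mem_filter.mp hv).2.symm).cancel_left_div_gcd
      (by exact_mod_cast hk)
    rwa [Int.gcd_comm, ← Int.natCast_div, Int.natCast_modEq_iff] at huv

theorem congruence_solvable_iff (k : ℕ) (hk : 0 < k) (d r : ℤ) :
    ((∃ u : ℤ, Int.gcd u (k : ℤ) = 1 ∧ (d * u) % (k : ℤ) = r % (k : ℤ)) ↔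
      Int.gcd d (k : ℤ) = Int.gcd r (k : ℤ)) ∧
    (Int.gcd d (k : ℤ) = Int.gcd r (k : ℤ) →
      ((Finset.range k).filter
        (fun u => Nat.gcd u k = 1 ∧ (d * u) % (k : ℤ) = r % (k : ℤ))).card ≤
        Int.gcd d (k : ℤ)) := by
  simp only [← Int.isCoprime_iff_gcd_eq_one]
  refine ⟨⟨fun ⟨u, hu, hmod⟩ => ?_, fun h => Int.exists_isCoprime_mul_modEq hk.ne' h⟩,
    fun _ => ?_⟩
  · rw [← Int.gcd_mul_right_cancel_of_isCoprime d hu]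
    exact Int.gcd_eq_of_modEq hmod
  · exact (card_le_card (monotone_filter_right _ fun _ _ hu => hu.2)).trans
      (Int.card_filter_mul_modEq_le k d r)
end

section
/- Let \alpha be irrational, and suppose q \in \mathbb{N}, a \in \mathbb{Z} satisfy gcd(2a, q) = 1 and |\alpha - a/q| < 24/q^2. Let 0 < \beta < 1, L = q^\beta, X = q^{1+\beta}, and \gamma = (1-\beta)/(1+\beta). If n \le 2X is a positive integer such that a n \equiv b \pmod{q} for some integer b with |b| \le L and gcd(b, q) = 1, then ||\alpha n|| \le C n^{-\gamma} for an absolute constant C > 0 (for q sufficiently large). -/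
theorem good_approx_of_congruence (α : ℝ) (hα : Irrational α) :
    ∃ C : ℝ, 0 < C ∧ ∀ β : ℝ, 0 < β → β < 1 → ∃ q0 : ℕ, ∀ q : ℕ, q0 ≤ q →
      ∀ a : ℤ, Int.gcd (2 * a) (q : ℤ) = 1 →
        |α - (a : ℝ) / (q : ℝ)| < 24 / (q : ℝ) ^ 2 →
          ∀ n : ℕ, 0 < n → (n : ℝ) ≤ 2 * (q : ℝ) ^ ((1 : ℝ) + β) →
            ∀ b : ℤ, |(b : ℝ)| ≤ (q : ℝ) ^ β → Int.gcd b (q : ℤ) = 1 →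
              (a * (n : ℤ)) % (q : ℤ) = b % (q : ℤ) →
                |α * n - round (α * n)| ≤ C * (n : ℝ) ^ (-((1 - β) / (1 + β))) := by
  refine ⟨98, by norm_num, ?_⟩
  intro β hβ0 hβ1
  refine ⟨1, ?_⟩
  intro q hq a hgcd hαa n hn hnX b hb hbq hcong
  set γ := (1 - β) / (1 + β) with hγdef
  have h1β : (0 : ℝ) < 1 + β := by linarith
  have hγ0 : 0 ≤ γ := div_nonneg (by linarith) h1β.le
  have hγ1 : γ ≤ 1 := by rw [hγdef, div_le_one h1β]; linarith
  have hq1 : (1 : ℝ) ≤ (q : ℝ) := by exact_mod_cast hq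
  have hq0 : (0 : ℝ) < (q : ℝ) := by linarith
  have hn1 : (1 : ℝ) ≤ (n : ℝ) := by exact_mod_cast hn
  have hn0 : (0 : ℝ) < (n : ℝ) := by linarith
  -- congruence gives an integer k with b - a n = q k
  obtain ⟨k, hk⟩ := Int.ModEq.dvd (hcong : Int.ModEq (q : ℤ) (a * n) b)
  have hkR : (b : ℝ) - (a : ℝ) * (n : ℝ) = (q : ℝ) * (k : ℝ) := by exact_mod_cast hk
  have key : α * (n : ℝ) - ((-k : ℤ) : ℝ) = (n : ℝ) * (α - (a : ℝ) / q) + (b : ℝ) / q := by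
    push_cast
    field_simp
    nlinarith [hkR]
  -- bound the distance by 49 q^(β-1)
  have hqb1 : (0 : ℝ) < (q : ℝ) ^ (β - 1) := Real.rpow_pos_of_pos hq0 _
  have hbound : |α * (n : ℝ) - ((-k : ℤ) : ℝ)| ≤ 49 * (q : ℝ) ^ (β - 1) := by
    rw [key]
    have h1 : |(n : ℝ) * (α - (a : ℝ) / q)| ≤
        (2 * (q : ℝ) ^ ((1 : ℝ) + β)) * (24 / (q : ℝ) ^ 2) := by
      rw [abs_mul, abs_of_pos hn0]
      apply mul_le_mul hnX hαa.le (abs_nonneg _)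
      positivity
    have h2 : |(b : ℝ) / q| ≤ (q : ℝ) ^ β / q := by
      rw [abs_div, abs_of_pos hq0]
      gcongr
    have e1 : (2 * (q : ℝ) ^ ((1 : ℝ) + β)) * (24 / (q : ℝ) ^ 2) = 48 * (q : ℝ) ^ (β - 1) := by
      have h : (q : ℝ) ^ ((1 : ℝ) + β) = (q : ℝ) ^ (β - 1) * (q : ℝ) ^ 2 := by
        rw [← Real.rpow_natCast (q : ℝ) 2, ← Real.rpow_add hq0]
        congr 1
        push_cast
        ring
      rw [h]
      field_simp
      ring
    have e2 : (q : ℝ) ^ β / (q : ℝ) = (q : ℝ) ^ (β - 1) := by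
      rw [Real.rpow_sub hq0, Real.rpow_one]
    calc |(n : ℝ) * (α - (a : ℝ) / q) + (b : ℝ) / q|
        ≤ |(n : ℝ) * (α - (a : ℝ) / q)| + |(b : ℝ) / q| := abs_add_le _ _
      _ ≤ (2 * (q : ℝ) ^ ((1 : ℝ) + β)) * (24 / (q : ℝ) ^ 2) + (q : ℝ) ^ β / q := by
          exact add_le_add h1 h2
      _ = 49 * (q : ℝ) ^ (β - 1) := by rw [e1, e2]; ring
  have hround := (round_le (α * (n : ℝ)) (-k)).trans hbound
  -- now compare 49 q^(β-1) with 98 n^(-γ)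
  have hng : (n : ℝ) ^ γ ≤ 2 * (q : ℝ) ^ (1 - β) := by
    calc (n : ℝ) ^ γ ≤ (2 * (q : ℝ) ^ ((1 : ℝ) + β)) ^ γ :=
          Real.rpow_le_rpow hn0.le hnX hγ0
      _ = 2 ^ γ * ((q : ℝ) ^ ((1 : ℝ) + β)) ^ γ :=
          Real.mul_rpow (by norm_num) (Real.rpow_pos_of_pos hq0 _).le
      _ = 2 ^ γ * (q : ℝ) ^ (1 - β) := by
          rw [← Real.rpow_mul hq0.le]
          congr 1
          rw [hγdef]
          field_simp
      _ ≤ 2 * (q : ℝ) ^ (1 - β) := by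
          have h2γ : (2 : ℝ) ^ γ ≤ 2 := by
            calc (2 : ℝ) ^ γ ≤ (2 : ℝ) ^ (1 : ℝ) :=
                Real.rpow_le_rpow_of_exponent_le (by norm_num) hγ1
              _ = 2 := Real.rpow_one 2
          exact mul_le_mul_of_nonneg_right h2γ (Real.rpow_nonneg hq0.le _)
  have hmul : (q : ℝ) ^ (β - 1) * (q : ℝ) ^ (1 - β) = 1 := by
    rw [← Real.rpow_add hq0]
    norm_num
  have hnγ : (0 : ℝ) < (n : ℝ) ^ γ := Real.rpow_pos_of_pos hn0 _
  rw [Real.rpow_neg hn0.le]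
  calc |α * (n : ℝ) - round (α * (n : ℝ))| ≤ 49 * (q : ℝ) ^ (β - 1) := hround
    _ ≤ 98 * ((n : ℝ) ^ γ)⁻¹ := by
        rw [← div_eq_mul_inv, le_div_iff₀ hnγ]
        nlinarith [mul_le_mul_of_nonneg_left hng hqb1.le, hmul]
end
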